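/- For a continuous action φ: G × X → X on a compact metric space, the set PSh(φ) of persistent shadowable points is closed in X if and only if the set M_{PSh}(X,φ) of Borel probability measures compatible with the persistent shadowing property is closed in M(X) with the weak* topology. -/

import Mathlib

open MeasureTheory

def ContGroupAction (G : Type*) [Group G] (X : Type*) [MetricSpace X] (φ : G → X → X) : Prop :=
  (∀ g : G, Continuous (φ g)) ∧ (∀ g h : G, ∀ x : X, φ (g * h) x = φ g (φ h x)) ∧
    (∀ x : X, φ (1 : G) x = x)

def IsPseudoOrbit {G : Type*} [Group G] {X : Type*} [MetricSpace X]
    (S : Set G) (ψ : G → X → X) (δ : ℝ) (f : G → X) : Prop :=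
  ∀ s ∈ S, ∀ g : G, dist (f (s * g)) (ψ s (f g)) < δ

def CloseActions {G : Type*} [Group G] {X : Type*} [MetricSpace X]
    (S : Set G) (φ ψ : G → X → X) (δ : ℝ) : Prop :=
  ∀ s ∈ S, ∀ x : X, dist (φ s x) (ψ s x) < δ

def PersistentShadowing {G : Type*} [Group G] {X : Type*} [MetricSpace X]
    (S : Set G) (φ : G → X → X) : Prop :=
  ∀ ε > (0:ℝ), ∃ δ > (0:ℝ), ∀ ψ : G → X → X, ContGroupAction G X ψ → CloseActions S φ ψ δ →
    ∀ f : G → X, IsPseudoOrbit S ψ δ f → ∃ p : X, ∀ g : G, dist (f g) (ψ g p) < ε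

def Shadowing {G : Type*} [Group G] {X : Type*} [MetricSpace X]
    (S : Set G) (φ : G → X → X) : Prop :=
  ∀ ε > (0:ℝ), ∃ δ > (0:ℝ), ∀ f : G → X, IsPseudoOrbit S φ δ f →
    ∃ p : X, ∀ g : G, dist (f g) (φ g p) < ε

def PShSet {G : Type*} [Group G] {X : Type*} [MetricSpace X]
    (S : Set G) (φ : G → X → X) (δ ε : ℝ) : Set X :=
  {x | ∀ ψ : G → X → X, ContGroupAction G X ψ → CloseActions S φ ψ δ →
    ∀ f : G → X, IsPseudoOrbit S ψ δ f → f 1 = x →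
      ∃ p : X, ∀ g : G, dist (f g) (ψ g p) < ε}

def PShPoint {G : Type*} [Group G] {X : Type*} [MetricSpace X]
    (S : Set G) (φ : G → X → X) (x : X) : Prop :=
  ∀ ε > (0:ℝ), ∃ δ > (0:ℝ), x ∈ PShSet S φ δ ε

def ShPoint {G : Type*} [Group G] {X : Type*} [MetricSpace X]
    (S : Set G) (φ : G → X → X) (x : X) : Prop :=
  ∀ ε > (0:ℝ), ∃ δ > (0:ℝ), ∀ f : G → X, IsPseudoOrbit S φ δ f → f 1 = x →
    ∃ p : X, ∀ g : G, dist (f g) (φ g p) < ε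

def UPersisBetaPoint {G : Type*} [Group G] {X : Type*} [MetricSpace X]
    (S : Set G) (φ : G → X → X) (x : X) : Prop :=
  ∀ ε > (0:ℝ), ∃ δ > (0:ℝ), ∀ ψ : G → X → X, ContGroupAction G X ψ → CloseActions S φ ψ δ →
    ∀ x' : X, dist x' x < δ → ∃ y : X, ∀ g : G, dist (φ g x') (ψ g y) < ε

def BetaPersistent {G : Type*} [Group G] {X : Type*} [MetricSpace X]
    (S : Set G) (φ : G → X → X) : Prop :=
  ∀ ε > (0:ℝ), ∃ δ > (0:ℝ), ∀ ψ : G → X → X, ContGroupAction G X ψ → CloseActions S φ ψ δ →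
    ∀ x : X, ∃ y : X, ∀ g : G, dist (φ g x) (ψ g y) < ε

def CompatiblePSh {G : Type*} [Group G] {X : Type*} [MetricSpace X] [MeasurableSpace X]
    (S : Set G) (φ : G → X → X) (μ : Measure X) : Prop :=
  ∀ ε > (0:ℝ), ∃ δ > (0:ℝ), ∀ A : Set X, MeasurableSet A → 0 < μ A →
    (A ∩ PShSet S φ δ ε).Nonempty

def MeasSupp {X : Type*} [MetricSpace X] [MeasurableSpace X] (μ : Measure X) : Set X :=
  {x | ∀ U : Set X, IsOpen U → x ∈ U → 0 < μ U}

/-!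
Redefining a pseudo-orbit through `x` to pass through a nearby `y` at the identity keeps it a
pseudo-orbit, so a point `x` near a `(δ, ε)`-persistently shadowable point `y` is
`(δ', 2ε)`-persistently shadowable, with `δ'` uniform because the finitely many generators act
uniformly equicontinuously. Hence a compatible measure gives no mass to non-shadowable points,
and on a compact set of persistently shadowable points `δ` can be chosen uniformly. So when
`PSh(φ)` is closed, compatibility of `μ` means `μ (PSh(φ)ᶜ) = 0`, a closed condition by the
portmanteau theorem. Conversely, `PSh(φ)` is the preimage of the compatible measures under the
continuous map `x ↦ δₓ`.
-/

open Filter Set Topology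

lemma MeasureTheory.ProbabilityMeasure.lowerSemicontinuous_apply_of_isOpen {Ω : Type*} [MeasurableSpace Ω]
    [TopologicalSpace Ω] [OpensMeasurableSpace Ω] [HasOuterApproxClosed Ω] {U : Set Ω}
    (hU : IsOpen U) : LowerSemicontinuous fun μ : ProbabilityMeasure Ω => (μ : Measure Ω) U :=
  lowerSemicontinuous_iff_le_liminf.2 fun _ =>
    ProbabilityMeasure.le_liminf_measure_open_of_tendsto tendsto_id hU

lemma exists_pos_forall_dist_lt_of_finite {ι X : Type*} [MetricSpace X] [CompactSpace X]
    {F : ι → X → X} {S : Set ι} (hSfin : S.Finite) (hF : ∀ s ∈ S, Continuous (F s)) {η : ℝ}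
    (hη : 0 < η) : ∃ r > 0, ∀ s ∈ S, ∀ a b, dist a b < r → dist (F s a) (F s b) < η := by
  have := hSfin.to_subtype
  have hequi : UniformEquicontinuous fun s : S => F s :=
    uniformEquicontinuous_finite.2 fun s => CompactSpace.uniformContinuous_of_continuous (hF s s.2)
  obtain ⟨r, hr, h⟩ := Metric.uniformEquicontinuous_iff.1 hequi η hη
  exact ⟨r, hr, fun s hs a b hab => h a b hab ⟨s, hs⟩⟩

section PseudoOrbit

variable {G : Type*} [Group G] {X : Type*} [MetricSpace X] {S : Set G}

lemma IsPseudoOrbit.mono {ψ : G → X → X} {δ δ' : ℝ} {f : G → X}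
    (hf : IsPseudoOrbit S ψ δ f) (h : δ ≤ δ') : IsPseudoOrbit S ψ δ' f :=
  fun s hs g => (hf s hs g).trans_le h

lemma IsPseudoOrbit.of_dist_lt {ψ : G → X → X} {δ r η : ℝ} {f f' : G → X}
    (hf : IsPseudoOrbit S ψ δ f) (hff' : ∀ g, dist (f' g) (f g) < r)
    (hψ : ∀ s ∈ S, ∀ a b, dist a b < r → dist (ψ s a) (ψ s b) < η) :
    IsPseudoOrbit S ψ (r + δ + η) f' := by
  intro s hs g
  calc dist (f' (s * g)) (ψ s (f' g))
      ≤ dist (f' (s * g)) (f (s * g)) + dist (f (s * g)) (ψ s (f g))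
          + dist (ψ s (f g)) (ψ s (f' g)) := dist_triangle4 _ _ _ _
    _ < r + δ + η :=
      add_lt_add (add_lt_add (hff' _) (hf s hs g))
        (hψ s hs _ _ (by rw [dist_comm]; exact hff' g))

lemma CloseActions.dist_lt {φ ψ : G → X → X} {δ r η : ℝ} (hclose : CloseActions S φ ψ δ)
    (hφ : ∀ s ∈ S, ∀ a b, dist a b < r → dist (φ s a) (φ s b) < η) :
    ∀ s ∈ S, ∀ a b, dist a b < r → dist (ψ s a) (ψ s b) < δ + η + δ := by
  intro s hs a b hab
  calc dist (ψ s a) (ψ s b) ≤ dist (ψ s a) (φ s a) + dist (φ s a) (φ s b) + dist (φ s b) (ψ s b) :=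
        dist_triangle4 _ _ _ _
    _ < δ + η + δ := by
      rw [dist_comm (ψ s a)]
      exact add_lt_add (add_lt_add (hclose s hs a) (hφ s hs a b hab)) (hclose s hs b)

end PseudoOrbit

section PersistentShadowing

variable {G : Type*} [Group G] {X : Type*} [MetricSpace X] {S : Set G} {φ : G → X → X}

lemma pshSet_subset_pshSet_of_le {δ δ' ε : ℝ} (h : δ' ≤ δ) :
    PShSet S φ δ ε ⊆ PShSet S φ δ' ε :=
  fun _ hx ψ hψ hclose f hf hf1 =>
    hx ψ hψ (fun s hs y => (hclose s hs y).trans_le h) f (hf.mono h) hf1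

variable [CompactSpace X]

lemma exists_forall_dist_lt_mem_pshSet (hSfin : S.Finite) (hφ : ∀ s ∈ S, Continuous (φ s))
    {δ ε : ℝ} (hδ : 0 < δ) (hε : 0 < ε) :
    ∃ r > 0, ∃ δ' > 0, ∀ x y, dist x y < r → y ∈ PShSet S φ δ ε → x ∈ PShSet S φ δ' (2 * ε) := by
  obtain ⟨r₁, hr₁, hmod⟩ := exists_pos_forall_dist_lt_of_finite hSfin hφ (by positivity : 0 < δ / 4)
  set r := min r₁ (min ε (δ / 4))
  have hrε : r ≤ ε := (min_le_right _ _).trans (min_le_left _ _)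
  have hrδ : r ≤ δ / 4 := (min_le_right _ _).trans (min_le_right _ _)
  refine ⟨r, by positivity, δ / 8, by positivity, ?_⟩
  classical
  rintro x y hxy hy ψ hψ hclose f hf rfl
  set f' := Function.update f 1 y
  have hff' : ∀ g, dist (f' g) (f g) < r := by
    intro g
    rcases eq_or_ne g 1 with rfl | hg
    · simpa [f', dist_comm] using hxy
    · simpa [f', Function.update_of_ne hg] using hxy.trans_le' dist_nonneg
  have hf' : IsPseudoOrbit S ψ δ f' :=
    (hf.of_dist_lt hff' (hclose.dist_lt fun s hs a b hab =>
      hmod s hs a b (hab.trans_le (min_le_left _ _)))).mono (by linarith)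
  obtain ⟨p, hp⟩ := hy ψ hψ (fun s hs z => (hclose s hs z).trans (by linarith)) f' hf'
    (Function.update_self _ _ _)
  refine ⟨p, fun g => ?_⟩
  calc dist (f g) (ψ g p) ≤ dist (f g) (f' g) + dist (f' g) (ψ g p) := dist_triangle _ _ _
    _ < r + ε := add_lt_add (by rw [dist_comm]; exact hff' g) (hp g)
    _ ≤ 2 * ε := by linarith

lemma PShPoint.exists_eventually_mem_pshSet (hSfin : S.Finite) (hφ : ∀ s ∈ S, Continuous (φ s))
    {x : X} (hx : PShPoint S φ x) {ε : ℝ} (hε : 0 < ε) :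
    ∃ δ > 0, ∀ᶠ z in 𝓝 x, z ∈ PShSet S φ δ ε := by
  obtain ⟨δ, hδ, hxδ⟩ := hx (ε / 2) (half_pos hε)
  obtain ⟨r, hr, δ', hδ', htransfer⟩ :=
    exists_forall_dist_lt_mem_pshSet hSfin hφ hδ (half_pos hε)
  refine ⟨δ', hδ', ?_⟩
  filter_upwards [Metric.ball_mem_nhds x hr] with z hz
  simpa only [two_mul, add_halves] using htransfer z x hz hxδ

lemma IsCompact.exists_subset_pshSet (hSfin : S.Finite) (hφ : ∀ s ∈ S, Continuous (φ s))
    {K : Set X} (hK : IsCompact K) (hKP : ∀ x ∈ K, PShPoint S φ x) {ε : ℝ} (hε : 0 < ε) :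
    ∃ δ > 0, K ⊆ PShSet S φ δ ε := by
  refine hK.induction_on (p := fun t => ∃ δ > 0, t ⊆ PShSet S φ δ ε)
    ⟨1, one_pos, empty_subset _⟩ ?_ ?_ ?_
  · rintro s t hst ⟨δ, hδ, ht⟩
    exact ⟨δ, hδ, hst.trans ht⟩
  · rintro s t ⟨δ₁, hδ₁, hs⟩ ⟨δ₂, hδ₂, ht⟩
    exact ⟨min δ₁ δ₂, lt_min hδ₁ hδ₂, union_subset
      (hs.trans (pshSet_subset_pshSet_of_le (min_le_left _ _)))
      (ht.trans (pshSet_subset_pshSet_of_le (min_le_right _ _)))⟩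
  · intro x hx
    obtain ⟨δ, hδ, hnhds⟩ := (hKP x hx).exists_eventually_mem_pshSet hSfin hφ hε
    exact ⟨_, mem_nhdsWithin_of_mem_nhds hnhds, δ, hδ, fun _ hz => hz⟩

variable [MeasurableSpace X] [OpensMeasurableSpace X]

lemma CompatiblePSh.measure_compl_setOf_pshPoint (hSfin : S.Finite)
    (hφ : ∀ s ∈ S, Continuous (φ s)) {μ : Measure X} (hμ : CompatiblePSh S φ μ) :
    μ {x | PShPoint S φ x}ᶜ = 0 := by
  refine measure_null_of_locally_null _ fun x hx => ?_
  obtain ⟨ε, hε, hxε⟩ : ∃ ε > 0, ∀ δ > 0, x ∉ PShSet S φ δ ε := by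
    simpa [PShPoint] using hx
  obtain ⟨δ, hδ, hcompat⟩ := hμ (ε / 2) (half_pos hε)
  obtain ⟨r, hr, δ', hδ', htransfer⟩ :=
    exists_forall_dist_lt_mem_pshSet hSfin hφ hδ (half_pos hε)
  refine ⟨Metric.ball x r, mem_nhdsWithin_of_mem_nhds (Metric.ball_mem_nhds x hr), ?_⟩
  by_contra hball
  obtain ⟨y, hyx, hy⟩ := hcompat _ Metric.isOpen_ball.measurableSet (pos_iff_ne_zero.2 hball)
  have hxδ' := htransfer x y (Metric.mem_ball'.1 hyx) hy
  rw [two_mul, add_halves] at hxδ'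
  exact hxε δ' hδ' hxδ'

lemma compatiblePSh_iff_measure_compl_eq_zero (hSfin : S.Finite)
    (hφ : ∀ s ∈ S, Continuous (φ s)) (hC : IsClosed {x | PShPoint S φ x}) (μ : Measure X) :
    CompatiblePSh S φ μ ↔ μ {x | PShPoint S φ x}ᶜ = 0 := by
  refine ⟨fun hμ => hμ.measure_compl_setOf_pshPoint hSfin hφ, fun hμ ε hε => ?_⟩
  obtain ⟨δ, hδ, hsub⟩ := hC.isCompact.exists_subset_pshSet hSfin hφ (fun _ hx => hx) hε
  refine ⟨δ, hδ, fun A _ hA => ?_⟩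
  obtain ⟨x, hxA, hx⟩ : (A ∩ {x | PShPoint S φ x}).Nonempty := by
    by_contra hempty
    exact hA.ne' (measure_mono_null (fun x hxA hx => hempty ⟨x, hxA, hx⟩) hμ)
  exact ⟨x, hxA, hsub hx⟩

end PersistentShadowing

lemma compatiblePSh_dirac_iff {G : Type*} [Group G] {X : Type*} [MetricSpace X]
    [MeasurableSpace X] [MeasurableSingletonClass X] (S : Set G) (φ : G → X → X) (x : X) :
    CompatiblePSh S φ (Measure.dirac x) ↔ PShPoint S φ x := by
  refine ⟨fun hx ε hε => ?_, fun hx ε hε => ?_⟩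
  · obtain ⟨δ, hδ, hcompat⟩ := hx ε hε
    obtain ⟨_, rfl, hxδ⟩ := hcompat {x} (measurableSet_singleton x) (by simp)
    exact ⟨δ, hδ, hxδ⟩
  · obtain ⟨δ, hδ, hxδ⟩ := hx ε hε
    refine ⟨δ, hδ, fun A hAm hA => ⟨x, ?_, hxδ⟩⟩
    by_contra hxA
    simp [Measure.dirac_apply' _ hAm, hxA] at hA

theorem stmt18_general {G : Type*} [Group G] {X : Type*} [MetricSpace X] [CompactSpace X]
    [MeasurableSpace X] [BorelSpace X]
    (S : Set G) (hSfin : S.Finite)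
    (φ : G → X → X) (hφ : ContGroupAction G X φ) :
    IsClosed {x : X | PShPoint S φ x} ↔
      IsClosed {μ : ProbabilityMeasure X | CompatiblePSh S φ μ.toMeasure} := by
  have hφS : ∀ s ∈ S, Continuous (φ s) := fun s _ => hφ.1 s
  constructor
  · intro hC
    have hcompat : {μ : ProbabilityMeasure X | CompatiblePSh S φ μ.toMeasure} =
        (fun μ : ProbabilityMeasure X => μ.toMeasure {x | PShPoint S φ x}ᶜ) ⁻¹' Iic 0 := by
      ext μ
      exact (compatiblePSh_iff_measure_compl_eq_zero hSfin hφS hC _).trans nonpos_iff_eq_zero.symm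
    rw [hcompat]
    exact (ProbabilityMeasure.lowerSemicontinuous_apply_of_isOpen hC.isOpen_compl).isClosed_preimage 0
  · intro hM
    convert hM.preimage continuous_diracProba using 1
    ext x
    exact (compatiblePSh_dirac_iff S φ x).symm

theorem stmt18 {G : Type*} [Group G] {X : Type*} [MetricSpace X] [CompactSpace X]
    [MeasurableSpace X] [BorelSpace X]
    (S : Set G) (hSfin : S.Finite) (hSsym : ∀ s ∈ S, s⁻¹ ∈ S)
    (hSgen : Subgroup.closure S = ⊤)
    (φ : G → X → X) (hφ : ContGroupAction G X φ) :
    IsClosed {x : X | PShPoint S φ x} ↔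
      IsClosed {μ : ProbabilityMeasure X | CompatiblePSh S φ μ.toMeasure} :=
  stmt18_general S hSfin φ hφ
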